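/- arXiv:1802.06156 — 2 statements merged into one kernel-verified Lean document; each statement's English description precedes it below -/
import Mathlib

section
/- Let g: ℝ → ℝ be differentiable with |g'(t)| ≤ c for all t, and let K_h be the Gaussian density with standard deviation h > 0. Then for every a ∈ ℝ, |∫_ℝ K_h(t) g(a + t) dt − g(a)| ≤ √(2/π) · c · h. -/
open MeasureTheory

open Real Filter in
lemma gauss_Ioi_integral {b : ℝ} (hb : 0 < b) :
    ∫ x in Set.Ioi (0:ℝ), x * Real.exp (-b * x ^ 2) = (2*b)⁻¹ := by
  have hd : ∀ x ∈ Set.Ici (0:ℝ), HasDerivAt (fun x => -(2*b)⁻¹ * Real.exp (-b*x^2))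
      (x * Real.exp (-b*x^2)) x := by
    intro x _
    have h1 : HasDerivAt (fun x : ℝ => -b*x^2) (-b*(2*x)) x := by
      simpa using ((hasDerivAt_pow 2 x).const_mul (-b))
    have h2 := (h1.exp).const_mul (-(2*b)⁻¹)
    refine h2.congr_deriv ?_
    have hinv : (2*b)⁻¹ * (2*b) = 1 := inv_mul_cancel₀ (by positivity)
    linear_combination (x * Real.exp (-b*x^2)) * hinv
  have hint : IntegrableOn (fun x : ℝ => x * Real.exp (-b*x^2)) (Set.Ioi 0) :=
    (integrable_mul_exp_neg_mul_sq hb).integrableOn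
  have htend : Tendsto (fun x:ℝ => -(2*b)⁻¹ * Real.exp (-b*x^2)) atTop (nhds 0) := by
    have h3 : Tendsto (fun x:ℝ => Real.exp (-b*x^2)) atTop (nhds 0) := by
      apply Real.tendsto_exp_atBot.comp
      exact (tendsto_pow_atTop two_ne_zero).const_mul_atTop_of_neg (neg_lt_zero.2 hb)
    simpa using h3.const_mul (-(2*b)⁻¹)
  have := MeasureTheory.integral_Ioi_of_hasDerivAt_of_tendsto' hd hint htend
  simpa using this

lemma gauss_abs_integral {b : ℝ} (hb : 0 < b) :
    ∫ x : ℝ, |x| * Real.exp (-b * x ^ 2) = b⁻¹ := by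
  have h1 := integral_comp_abs (f := fun x => x * Real.exp (-b*x^2))
  simp_rw [sq_abs] at h1
  rw [h1, gauss_Ioi_integral hb]
  rw [mul_inv]
  ring

theorem stmt_12 (h c a : ℝ) (hh : 0 < h) (g : ℝ → ℝ)
    (hg : Differentiable ℝ g) (hg' : ∀ t : ℝ, |deriv g t| ≤ c) :
    |(∫ t : ℝ, ((1 / Real.sqrt (2 * Real.pi * h ^ 2)) *
        Real.exp (-(t ^ 2) / (2 * h ^ 2))) * g (a + t)) - g a| ≤
      Real.sqrt (2 / Real.pi) * c * h := by
  have hc : 0 ≤ c := le_trans (abs_nonneg _) (hg' 0)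
  set b : ℝ := (2*h^2)⁻¹ with hbdef
  have hb : 0 < b := by positivity
  have hexp : ∀ t : ℝ, -(t^2)/(2*h^2) = -b*t^2 := by
    intro t; rw [hbdef, div_eq_mul_inv]; ring
  set σ : ℝ := Real.sqrt (2 * Real.pi * h ^ 2) with hσdef
  have hσ : 0 < σ := Real.sqrt_pos.mpr (by positivity)
  -- Lipschitz bound
  have lip : ∀ x y : ℝ, |g x - g y| ≤ c * |x - y| := by
    have L : LipschitzWith c.toNNReal g := by
      apply lipschitzWith_of_nnnorm_deriv_le hg
      intro x
      have := hg' x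
      simpa [← NNReal.coe_le_coe, Real.coe_toNNReal _ hc, Real.nnnorm_of_nonneg] using
        (by simpa [Real.norm_eq_abs] using this : ‖deriv g x‖ ≤ c)
    intro x y
    have := L.dist_le_mul x y
    simpa [Real.dist_eq, Real.coe_toNNReal _ hc] using this
  -- total mass
  have hmass : ∫ t : ℝ, Real.exp (-b * t ^ 2) = σ := by
    rw [integral_gaussian, hσdef]
    congr 1
    rw [hbdef]
    field_simp
  have hKmass : ∫ t : ℝ, (1/σ) * Real.exp (-b * t ^ 2) = 1 := by
    rw [integral_const_mul, hmass]
    field_simp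
  -- integrability facts
  have hint_exp : Integrable fun t : ℝ => Real.exp (-b * t ^ 2) :=
    integrable_exp_neg_mul_sq hb
  have hint_abs : Integrable fun t : ℝ => |t| * Real.exp (-b * t ^ 2) := by
    have := (integrable_mul_exp_neg_mul_sq hb).abs
    simpa [abs_mul, Real.abs_exp] using this
  have hgcont : Continuous g := hg.continuous
  have hint_Kg : Integrable fun t : ℝ => ((1/σ) * Real.exp (-b * t ^ 2)) * g (a + t) := by
    apply Integrable.mono' (g := fun t => (1/σ) * ((|g a| * Real.exp (-b*t^2)) + c * (|t| * Real.exp (-b*t^2))))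
    · exact ((hint_exp.const_mul _).add (hint_abs.const_mul c)).const_mul _
    · exact (((continuous_const.mul (by continuity : Continuous fun t : ℝ => Real.exp (-b*t^2)))).mul
        (hgcont.comp (continuous_const.add continuous_id))).aestronglyMeasurable
    · filter_upwards with t
      rw [Real.norm_eq_abs, abs_mul]
      have hga : |g (a+t)| ≤ |g a| + c * |t| := by
        have := lip (a+t) a
        have h2 : |g (a+t)| - |g a| ≤ |g (a+t) - g a| := abs_sub_abs_le_abs_sub _ _
        simp only [add_sub_cancel_left] at this
        linarith
      have hKpos : 0 ≤ (1/σ) * Real.exp (-b*t^2) := by positivity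
      have : |(1/σ) * Real.exp (-b*t^2)| = (1/σ) * Real.exp (-b*t^2) := abs_of_nonneg hKpos
      rw [this]
      calc (1/σ) * Real.exp (-b*t^2) * |g (a+t)|
          ≤ (1/σ) * Real.exp (-b*t^2) * (|g a| + c * |t|) := by
            exact mul_le_mul_of_nonneg_left hga hKpos
        _ = (1/σ) * ((|g a| * Real.exp (-b*t^2)) + c * (|t| * Real.exp (-b*t^2))) := by ring
  -- rewrite the target integrand
  have hrw : (∫ t : ℝ, ((1 / Real.sqrt (2 * Real.pi * h ^ 2)) *
        Real.exp (-(t ^ 2) / (2 * h ^ 2))) * g (a + t))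
      = ∫ t : ℝ, ((1/σ) * Real.exp (-b * t ^ 2)) * g (a + t) := by
    congr 1 with t
    rw [hexp t]
  rw [hrw]
  -- subtract the mean
  have hconst : ∫ t : ℝ, ((1/σ) * Real.exp (-b * t ^ 2)) * g a = g a := by
    rw [integral_mul_const, hKmass, one_mul]
  have hsplit : (∫ t : ℝ, ((1/σ) * Real.exp (-b * t ^ 2)) * (g (a + t) - g a))
      = (∫ t : ℝ, ((1/σ) * Real.exp (-b * t ^ 2)) * g (a + t)) - g a := by
    simp_rw [mul_sub]
    rw [integral_sub hint_Kg ((hint_exp.const_mul _).mul_const _), hconst]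
  rw [← hsplit]
  -- bound the integral
  have hbound : |∫ t : ℝ, ((1/σ) * Real.exp (-b * t ^ 2)) * (g (a + t) - g a)|
      ≤ ∫ t : ℝ, (1/σ) * c * (|t| * Real.exp (-b * t ^ 2)) := by
    have hn := norm_integral_le_integral_norm (μ := volume)
      (f := fun t : ℝ => ((1/σ) * Real.exp (-b * t ^ 2)) * (g (a + t) - g a))
    simp only [Real.norm_eq_abs] at hn
    refine hn.trans ?_
    apply integral_mono_of_nonneg
    · filter_upwards with t; positivity
    · exact (hint_abs.const_mul _)
    · filter_upwards with t
      have hKpos : 0 ≤ (1/σ) * Real.exp (-b*t^2) := by positivity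
      rw [abs_mul, abs_of_nonneg hKpos]
      have := lip (a+t) a
      simp only [add_sub_cancel_left] at this
      calc (1/σ) * Real.exp (-b*t^2) * |g (a+t) - g a|
          ≤ (1/σ) * Real.exp (-b*t^2) * (c * |t|) := mul_le_mul_of_nonneg_left this hKpos
        _ = (1/σ) * c * (|t| * Real.exp (-b*t^2)) := by ring
  refine hbound.trans ?_
  rw [integral_const_mul, gauss_abs_integral hb]
  -- final computation
  have hσval : σ = Real.sqrt (2 * Real.pi) * h := by
    rw [hσdef, Real.sqrt_mul (by positivity), Real.sqrt_sq hh.le]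
  have hπ : (0:ℝ) < Real.pi := Real.pi_pos
  have hs2π : (0:ℝ) < Real.sqrt (2 * Real.pi) := Real.sqrt_pos.mpr (by positivity)
  have hbinv : b⁻¹ = 2 * h^2 := by rw [hbdef, inv_inv]
  rw [hbinv, hσval]
  have key : 1 / (Real.sqrt (2*Real.pi) * h) * c * (2 * h^2) = Real.sqrt (2/Real.pi) * c * h := by
    have h1 : Real.sqrt (2/Real.pi) = 2 / Real.sqrt (2*Real.pi) := by
      rw [eq_div_iff hs2π.ne', ← Real.sqrt_mul (by positivity)]
      rw [show 2/Real.pi * (2*Real.pi) = 2^2 by field_simp]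
      rw [Real.sqrt_sq (by norm_num)]
    rw [h1]
    field_simp
  linarith [key.le, key.ge]
end

section
/- Let f: ℝ^{p×d} → ℝ be differentiable, B(τ) = (I + (τ/2)Q)^{-1}(I − (τ/2)Q)B₀ with Q = G B₀^T − B₀ G^T where G = ∇f(B₀), and B₀^T B₀ = I. Then the derivative of f(B(τ)) at τ = 0 equals −tr(G^T Q B₀) = −(1/2)‖Q‖_F² ≤ 0, so for sufficiently small τ > 0 the Cayley update does not increase f (descent property). -/
open Matrix

attribute [local instance] Matrix.frobeniusNormedAddCommGroup Matrix.frobeniusNormedSpace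
attribute [local instance] Matrix.frobeniusNormedRing Matrix.frobeniusNormedAlgebra

theorem stmt_18 (p d : ℕ) (f : Matrix (Fin p) (Fin d) ℝ → ℝ)
    (B₀ G : Matrix (Fin p) (Fin d) ℝ)
    (hB₀ : B₀ᵀ * B₀ = 1)
    (L : Matrix (Fin p) (Fin d) ℝ →L[ℝ] ℝ)
    (hL : ∀ H, L H = Matrix.trace (Gᵀ * H))
    (hf : HasFDerivAt f L B₀) :
    let Q := G * B₀ᵀ - B₀ * Gᵀ
    let Bcurve : ℝ → Matrix (Fin p) (Fin d) ℝ := fun τ =>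
      ((1 : Matrix (Fin p) (Fin p) ℝ) + (τ / 2) • Q)⁻¹ *
        ((1 : Matrix (Fin p) (Fin p) ℝ) - (τ / 2) • Q) * B₀
    HasDerivAt (fun τ => f (Bcurve τ)) (-(Matrix.trace (Gᵀ * Q * B₀))) 0 ∧
      -(Matrix.trace (Gᵀ * Q * B₀)) = -(1 / 2) * Matrix.trace (Qᵀ * Q) ∧
      -(Matrix.trace (Gᵀ * Q * B₀)) ≤ 0 := by
  intro Q Bcurve
  -- trace identities
  have hQT : Qᵀ = -Q := by
    simp only [Q, transpose_sub, transpose_mul, transpose_transpose]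
    abel
  have t4eq : trace (Gᵀ * B₀ * Gᵀ * B₀) = trace (G * B₀ᵀ * G * B₀ᵀ) := by
    rw [← trace_transpose (G * B₀ᵀ * G * B₀ᵀ)]
    simp only [transpose_mul, transpose_transpose]
    rw [trace_mul_comm, Matrix.mul_assoc Gᵀ B₀ Gᵀ]
  have key : trace (Gᵀ * Q * B₀) = trace (Gᵀ * G) - trace (Gᵀ * B₀ * Gᵀ * B₀) := by
    have expandQ : Gᵀ * Q * B₀ = Gᵀ*G*B₀ᵀ*B₀ - Gᵀ*B₀*Gᵀ*B₀ := by
      simp only [Q, Matrix.mul_sub, Matrix.sub_mul, Matrix.mul_assoc]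
    rw [expandQ, trace_sub, Matrix.mul_assoc (Gᵀ*G) B₀ᵀ B₀, hB₀, Matrix.mul_one]
  have key2 : trace (Qᵀ * Q) = 2 * trace (Gᵀ * Q * B₀) := by
    rw [hQT, Matrix.neg_mul, trace_neg]
    have expandQQ : Q*Q = G*B₀ᵀ*G*B₀ᵀ - G*B₀ᵀ*B₀*Gᵀ - (B₀*Gᵀ*G*B₀ᵀ - B₀*Gᵀ*B₀*Gᵀ) := by
      simp only [Q, Matrix.mul_sub, Matrix.sub_mul, Matrix.mul_assoc]
      abel
    have e1 : trace (G*B₀ᵀ*B₀*Gᵀ) = trace (Gᵀ * G) := by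
      rw [Matrix.mul_assoc G B₀ᵀ B₀, hB₀, Matrix.mul_one, trace_mul_comm]
    have e2 : trace (B₀*Gᵀ*G*B₀ᵀ) = trace (Gᵀ * G) := by
      rw [trace_mul_comm, ← Matrix.mul_assoc, ← Matrix.mul_assoc, hB₀, Matrix.one_mul]
    have e3 : trace (B₀*Gᵀ*B₀*Gᵀ) = trace (Gᵀ * B₀ * Gᵀ * B₀) := by
      rw [trace_mul_comm, ← Matrix.mul_assoc, ← Matrix.mul_assoc]
    rw [expandQQ, trace_sub, trace_sub, trace_sub, e1, e2, e3, ← t4eq, key]; ring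
  have hnn : 0 ≤ trace (Qᵀ * Q) := by
    rw [trace]
    apply Finset.sum_nonneg
    intro i _
    simp only [diag_apply, Matrix.mul_apply, transpose_apply]
    apply Finset.sum_nonneg
    intro j _
    exact mul_self_nonneg _
  refine ⟨?_, by linarith, by linarith⟩
  -- derivative part
  have h1 : HasDerivAt (fun τ : ℝ => τ / 2) (2⁻¹ : ℝ) 0 := by
    simpa using (hasDerivAt_id (0:ℝ)).div_const 2
  have hgd : HasDerivAt (fun τ : ℝ => (1 : Matrix (Fin p) (Fin p) ℝ) + (τ / 2) • Q)
      ((2⁻¹ : ℝ) • Q) 0 := by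
    exact (h1.smul_const Q).const_add 1
  have hsub : HasDerivAt (fun τ : ℝ => (1 : Matrix (Fin p) (Fin p) ℝ) - (τ / 2) • Q)
      (-((2⁻¹ : ℝ) • Q)) 0 := by
    exact (h1.smul_const Q).const_sub 1
  have hF : HasFDerivAt (Ring.inverse : Matrix (Fin p) (Fin p) ℝ → _)
      (-(ContinuousLinearMap.mulLeftRight ℝ _ 1 1))
      ((1 : Matrix (Fin p) (Fin p) ℝ) + ((0:ℝ) / 2) • Q) := by
    simpa using hasFDerivAt_ringInverse (𝕜 := ℝ) (1 : (Matrix (Fin p) (Fin p) ℝ)ˣ)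
  have hinv : HasDerivAt
      (fun τ : ℝ => Ring.inverse ((1 : Matrix (Fin p) (Fin p) ℝ) + (τ / 2) • Q))
      (-((2⁻¹ : ℝ) • Q)) 0 := by
    have h2 := hF.comp_hasDerivAt 0 hgd
    simp at h2
    exact h2
  have hmul : HasDerivAt
      (fun τ : ℝ => Ring.inverse ((1 : Matrix (Fin p) (Fin p) ℝ) + (τ / 2) • Q) *
        ((1 : Matrix (Fin p) (Fin p) ℝ) - (τ / 2) • Q)) (-Q) 0 := by
    have := hinv.mul hsub
    refine this.congr_deriv ?_
    simp [Ring.inverse_one]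
    module
  -- right multiplication by B₀ as a CLM
  let R : Matrix (Fin p) (Fin p) ℝ →ₗ[ℝ] Matrix (Fin p) (Fin d) ℝ :=
    { toFun := fun X => X * B₀
      map_add' := fun X Y => Matrix.add_mul X Y B₀
      map_smul' := fun c X => Matrix.smul_mul c X B₀ }
  have hcurve : HasDerivAt Bcurve (-(Q * B₀)) 0 := by
    have hc := (R.toContinuousLinearMap.hasFDerivAt).comp_hasDerivAt 0 hmul
    have hfun : Bcurve = fun τ =>
        R.toContinuousLinearMap (Ring.inverse ((1 : Matrix (Fin p) (Fin p) ℝ) + (τ / 2) • Q) *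
          ((1 : Matrix (Fin p) (Fin p) ℝ) - (τ / 2) • Q)) := by
      funext τ
      simp [Bcurve, R, Matrix.nonsing_inv_eq_ringInverse, LinearMap.toContinuousLinearMap]
    rw [hfun]
    refine hc.congr_deriv ?_
    simp [R, LinearMap.toContinuousLinearMap, Matrix.neg_mul]
    exact Matrix.neg_mul Q B₀
  have hB0 : Bcurve 0 = B₀ := by simp [Bcurve]
  have hf' : HasFDerivAt f L (Bcurve 0) := hB0.symm ▸ hf
  have final := hf'.comp_hasDerivAt 0 hcurve
  refine final.congr_deriv ?_
  refine (hL _).trans ?_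
  simp [Matrix.mul_neg, Matrix.mul_assoc]
end
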